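/- Let 𝒜 be a finite alphabet with d ≥ 2 symbols, let π = (π₀, π₁) be an irreducible combinatorial data on 𝒜, let ε ∈ {0,1}, and let π' = r_ε(π). Then Θ_{π,ε}(C^u_π) ⊆ C^u_{π'}, where C^u_π = −Ω_π(T⁺_π) and T⁺_π = {τ ∈ ℝ^𝒜 : Σ_{α: π₀(α) ≤ k} τ_α > 0 and Σ_{α: π₁(α) ≤ k} τ_α < 0 for every 1 ≤ k ≤ d−1}. -/

import Mathlib

open Matrix

/-- The top element of `Fin d` (corresponding to the value `d` in `{1, …, d}`). -/
def finTop (d : ℕ) (hd : 0 < d) : Fin d := ⟨d - 1, by omega⟩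

/-- The matrix `Ω_π` associated to the combinatorial data `π = (p0, p1)`. -/
def rvOmega {A : Type*} [Fintype A] (d : ℕ) (p0 p1 : A ≃ Fin d) :
    Matrix A A ℝ :=
  Matrix.of fun α β =>
    if p1 β < p1 α ∧ p0 α < p0 β then (1 : ℝ)
    else if p1 α < p1 β ∧ p0 β < p0 α then -1
    else 0

/-- The combinatorial data `π = (p0, p1)` is irreducible. -/
def rvIrreducible {A : Type*} (d : ℕ) (p0 p1 : A ≃ Fin d) : Prop :=
  ∀ j : ℕ, 1 ≤ j → j ≤ d - 1 →
    {α : A | (p0 α : ℕ) < j} ≠ {α : A | (p1 α : ℕ) < j}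

/-- The Rauzy–Veech update of the loser-side permutation; `e = π_ε` (winner side),
`f = π_{1−ε}` (the side being updated). -/
def rvUpdate {A : Type*} (d : ℕ) (hd : 0 < d) (e f : A ≃ Fin d) (α : A) : Fin d :=
  haveI : NeZero d := ⟨hd.ne'⟩
  if f α ≤ f (e.symm (finTop d hd)) then f α
  else if f α < finTop d hd then f α + 1
  else f (e.symm (finTop d hd)) + 1

/-- The Rauzy–Veech matrix `Θ_{π,ε} = I + E_{α(1−ε), α(ε)}`. -/
def rvTheta {A : Type*} [Fintype A] [DecidableEq A] (d : ℕ) (hd : 0 < d)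
    (e f : A ≃ Fin d) : Matrix A A ℝ :=
  1 + Matrix.single (f.symm (finTop d hd)) (e.symm (finTop d hd)) 1

/-- The convex cone `T⁺_π`: vectors `τ` with `Σ_{π₀(α) ≤ k} τ_α > 0` and
`Σ_{π₁(α) ≤ k} τ_α < 0` for every `1 ≤ k ≤ d − 1`.  (Values in `Fin d` are
identified with `{1,…,d}`, so `πᵢ(α) ≤ k ↔ (pᵢ α : ℕ) < k`.) -/
def rvTplus {A : Type*} [Fintype A] (d : ℕ) (p0 p1 : A ≃ Fin d) : Set (A → ℝ) :=
  {τ : A → ℝ | ∀ k : ℕ, 1 ≤ k → k ≤ d - 1 →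
    (0 < ∑ α ∈ Finset.univ.filter (fun α => (p0 α : ℕ) < k), τ α) ∧
    (∑ α ∈ Finset.univ.filter (fun α => (p1 α : ℕ) < k), τ α) < 0}

/-- The unstable cone `C^u_π = −Ω_π(T⁺_π)`. -/
def rvConeU {A : Type*} [Fintype A] (d : ℕ) (p0 p1 : A ≃ Fin d) : Set (A → ℝ) :=
  (fun τ => -((rvOmega d p0 p1).mulVec τ)) '' rvTplus d p0 p1

/-!
Exchanging `π₀` and `π₁` negates both `Ω_π` and `T⁺_π`, so it leaves `C^u_π` unchanged and
reduces everything to `ε = 0`. Write `W` and `L` for the winner and the loser (they differ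
because `π` is irreducible). Then `Ω_{π'} = Θ Ω_π Θᵀ`, and `τ ↦ Θ⁻ᵀ τ = τ - τ_L e_W` maps
`T⁺_π` into `T⁺_{π'}`. Indeed, every partial sum along the updated row `π'₁` is a partial
sum along `π₁`, with one exception: the partial sum ending at `W`, which becomes
`S + τ_W - τ_L` with `S ≤ 0`. This is negative because the conditions at `k = d - 1` give
`τ_W < τ_L`. Hence `Θ (-Ω_π τ) = -Ω_{π'} (Θ⁻ᵀ τ)` lies in `C^u_{π'}`.
-/

open Finset

section Positions

variable {A : Type*} {d : ℕ}

lemma val_lt_pred_iff_ne_finTop (hd : 0 < d) (x : Fin d) :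
    (x : ℕ) < d - 1 ↔ x ≠ finTop d hd := by
  have := x.isLt
  rw [Ne, Fin.ext_iff]
  change _ ↔ ¬(x : ℕ) = d - 1
  omega

lemma val_lt_pred_iff_ne_symm_finTop (hd : 0 < d) (g : A ≃ Fin d) (α : A) :
    (g α : ℕ) < d - 1 ↔ α ≠ g.symm (finTop d hd) := by
  rw [val_lt_pred_iff_ne_finTop hd, Ne, Ne, Equiv.eq_symm_apply]

lemma val_symm_finTop (hd : 0 < d) (g : A ≃ Fin d) :
    (g (g.symm (finTop d hd)) : ℕ) = d - 1 := by
  simp [finTop]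

lemma symm_finTop_ne_of_rvIrreducible (hd : 2 ≤ d) {p0 p1 : A ≃ Fin d}
    (hirr : rvIrreducible d p0 p1) :
    p0.symm (finTop d (Nat.zero_lt_of_lt hd)) ≠ p1.symm (finTop d (Nat.zero_lt_of_lt hd)) := by
  intro h
  apply hirr (d - 1) (by omega) le_rfl
  ext α
  simp only [Set.mem_ofPred_eq, val_lt_pred_iff_ne_symm_finTop (Nat.zero_lt_of_lt hd), h]

lemma val_rvUpdate (hd : 0 < d) (e f : A ≃ Fin d) (α : A) :
    (rvUpdate d hd e f α : ℕ) =
      if (f α : ℕ) ≤ f (e.symm (finTop d hd)) then (f α : ℕ)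
      else if (f α : ℕ) < d - 1 then (f α : ℕ) + 1
      else (f (e.symm (finTop d hd)) : ℕ) + 1 := by
  have : NeZero d := ⟨hd.ne'⟩
  have val_add_one (x : Fin d) (hx : (x : ℕ) < d - 1) : ((x + 1 : Fin d) : ℕ) = x + 1 := by
    rw [Fin.val_add, Fin.val_one', Nat.one_mod_eq_one.mpr (by omega), Nat.mod_eq_of_lt (by omega)]
  have htop : ((finTop d hd : Fin d) : ℕ) = d - 1 := rfl
  unfold rvUpdate
  simp only [Fin.le_def, Fin.lt_def, htop]
  split_ifs with hle hlt
  · rfl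
  · exact val_add_one _ hlt
  · exact val_add_one _ (by have := (f α).isLt; omega)

lemma val_rvUpdate_of_ne (hd : 0 < d) (e f : A ≃ Fin d) {α : A}
    (hα : α ≠ f.symm (finTop d hd)) :
    (rvUpdate d hd e f α : ℕ) =
      if (f α : ℕ) ≤ f (e.symm (finTop d hd)) then (f α : ℕ) else (f α : ℕ) + 1 := by
  rw [val_rvUpdate, if_pos ((val_lt_pred_iff_ne_symm_finTop hd f α).2 hα)]

lemma val_rvUpdate_symm_finTop (hd : 0 < d) {e f : A ≃ Fin d}
    (hWL : e.symm (finTop d hd) ≠ f.symm (finTop d hd)) :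
    (rvUpdate d hd e f (f.symm (finTop d hd)) : ℕ) = f (e.symm (finTop d hd)) + 1 := by
  have := (val_lt_pred_iff_ne_symm_finTop hd f _).2 hWL
  rw [val_rvUpdate, val_symm_finTop, if_neg (by omega), if_neg (by omega)]

lemma val_rvUpdate_lt_val_rvUpdate_iff (hd : 0 < d) (e f : A ≃ Fin d) {α β : A}
    (hα : α ≠ f.symm (finTop d hd)) (hβ : β ≠ f.symm (finTop d hd)) :
    (rvUpdate d hd e f α : ℕ) < rvUpdate d hd e f β ↔ (f α : ℕ) < f β := by
  rw [val_rvUpdate_of_ne hd e f hα, val_rvUpdate_of_ne hd e f hβ]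
  split_ifs <;> omega

end Positions

lemma one_add_single_mul_mul_transpose_apply {n R : Type*} [Fintype n] [DecidableEq n]
    [Semiring R] (M : Matrix n n R) (i j a b : n) :
    ((1 + single i j 1) * M * (1 + single i j 1)ᵀ : Matrix n n R) a b =
      M a b + (if a = i then M j b else 0) + (if b = i then M a j else 0) +
        (if a = i ∧ b = i then M j j else 0) := by
  simp only [transpose_add, transpose_one, transpose_single, add_mul, mul_add, one_mul,
    mul_one, single_mul_mul_single, Matrix.add_apply]
  by_cases ha : a = i <;> by_cases hb : b = i <;> simp [ha, hb, Ne.symm, add_assoc]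

section RauzyVeech

variable {A : Type*} [Fintype A] {d : ℕ}

lemma rvOmega_apply (p0 p1 : A ≃ Fin d) (α β : A) :
    rvOmega d p0 p1 α β =
      if (p1 β : ℕ) < p1 α ∧ (p0 α : ℕ) < p0 β then 1
      else if (p1 α : ℕ) < p1 β ∧ (p0 β : ℕ) < p0 α then -1 else 0 := by
  simp only [rvOmega, of_apply, Fin.lt_def]

lemma rvOmega_swap (p0 p1 : A ≃ Fin d) : rvOmega d p1 p0 = -rvOmega d p0 p1 := by
  ext α β
  rw [neg_apply, rvOmega_apply, rvOmega_apply]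
  split_ifs <;> first | omega | norm_num

def rvPartialSum (p : A ≃ Fin d) (τ : A → ℝ) (k : ℕ) : ℝ :=
  ∑ α ∈ univ.filter (fun α => (p α : ℕ) < k), τ α

lemma mem_rvTplus_iff {p0 p1 : A ≃ Fin d} {τ : A → ℝ} :
    τ ∈ rvTplus d p0 p1 ↔ ∀ k, 1 ≤ k → k ≤ d - 1 →
      0 < rvPartialSum p0 τ k ∧ rvPartialSum p1 τ k < 0 :=
  Iff.rfl

lemma rvPartialSum_zero (p : A ≃ Fin d) (τ : A → ℝ) : rvPartialSum p τ 0 = 0 := by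
  simp [rvPartialSum]

lemma rvPartialSum_neg (p : A ≃ Fin d) (τ : A → ℝ) (k : ℕ) :
    rvPartialSum p (-τ) k = -rvPartialSum p τ k := by
  simp [rvPartialSum]

lemma rvPartialSum_pred (hd : 0 < d) (p : A ≃ Fin d) (τ : A → ℝ) :
    rvPartialSum p τ (d - 1) = ∑ α, τ α - τ (p.symm (finTop d hd)) := by
  classical
  have : univ.filter (fun α => (p α : ℕ) < d - 1) = univ.erase (p.symm (finTop d hd)) := by
    ext α
    simp [val_lt_pred_iff_ne_symm_finTop hd]
  rw [rvPartialSum, this, sum_erase_eq_sub (mem_univ _)]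

lemma rvPartialSum_val_add_one (p : A ≃ Fin d) (τ : A → ℝ) (α : A) :
    rvPartialSum p τ (p α + 1) = rvPartialSum p τ (p α) + τ α := by
  classical
  have : univ.filter (fun β => (p β : ℕ) < p α + 1) =
      insert α (univ.filter fun β => (p β : ℕ) < p α) := by
    ext β
    simp only [mem_filter, mem_univ, true_and, mem_insert, ← p.apply_eq_iff_eq, Fin.ext_iff]
    omega
  rw [rvPartialSum, this, sum_insert (by simp), add_comm]
  rfl

lemma rvPartialSum_rvUpdate_of_le (hd : 0 < d) {e f f' : A ≃ Fin d}
    (hf' : ∀ α, f' α = rvUpdate d hd e f α) (τ : A → ℝ) {k : ℕ}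
    (hk : k ≤ f (e.symm (finTop d hd)) + 1) :
    rvPartialSum f' τ k = rvPartialSum f τ k := by
  refine sum_congr (filter_congr fun α _ => ?_) fun _ _ => rfl
  rw [hf', val_rvUpdate]
  have := (f α).isLt
  split_ifs <;> omega

lemma rvPartialSum_rvUpdate_succ (hd : 0 < d) {e f f' : A ≃ Fin d}
    (hf' : ∀ α, f' α = rvUpdate d hd e f α) (τ : A → ℝ) {k : ℕ}
    (hk : (f (e.symm (finTop d hd)) : ℕ) < k) (hkd : k < d) :
    rvPartialSum f' τ (k + 1) = rvPartialSum f τ k + τ (f.symm (finTop d hd)) := by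
  classical
  have : univ.filter (fun α => (f' α : ℕ) < k + 1) =
      insert (f.symm (finTop d hd)) (univ.filter fun α => (f α : ℕ) < k) := by
    ext α
    have hL : α = f.symm (finTop d hd) ↔ ¬(f α : ℕ) < d - 1 := by
      rw [val_lt_pred_iff_ne_symm_finTop hd, not_not]
    simp only [mem_filter, mem_univ, true_and, mem_insert, hL, hf', val_rvUpdate]
    split_ifs <;> omega
  rw [rvPartialSum, this, sum_insert (by simp [finTop]; omega), add_comm]
  rfl

lemma lt_of_mem_rvTplus (hd : 2 ≤ d) {p0 p1 : A ≃ Fin d} {τ : A → ℝ}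
    (hτ : τ ∈ rvTplus d p0 p1) :
    τ (p0.symm (finTop d (Nat.zero_lt_of_lt hd))) <
      τ (p1.symm (finTop d (Nat.zero_lt_of_lt hd))) := by
  obtain ⟨h0, h1⟩ := mem_rvTplus_iff.mp hτ (d - 1) (by omega) le_rfl
  rw [rvPartialSum_pred (by omega)] at h0 h1
  linarith

lemma neg_mem_rvTplus_swap {p0 p1 : A ≃ Fin d} {τ : A → ℝ} (hτ : τ ∈ rvTplus d p0 p1) :
    -τ ∈ rvTplus d p1 p0 := by
  refine mem_rvTplus_iff.mpr fun k hk1 hkd => ?_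
  obtain ⟨h0, h1⟩ := mem_rvTplus_iff.mp hτ k hk1 hkd
  simp only [rvPartialSum_neg]
  constructor <;> linarith

lemma rvConeU_subset_swap (p0 p1 : A ≃ Fin d) : rvConeU d p0 p1 ⊆ rvConeU d p1 p0 := by
  rintro _ ⟨τ, hτ, rfl⟩
  refine ⟨-τ, neg_mem_rvTplus_swap hτ, ?_⟩
  dsimp only
  rw [rvOmega_swap, neg_mulVec, mulVec_neg, neg_neg]

lemma rvConeU_swap (p0 p1 : A ≃ Fin d) : rvConeU d p1 p0 = rvConeU d p0 p1 :=
  (rvConeU_subset_swap p1 p0).antisymm (rvConeU_subset_swap p0 p1)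

variable [DecidableEq A]

lemma rvPartialSum_sub_single (p : A ≃ Fin d) (τ : A → ℝ) (W : A) (c : ℝ) (k : ℕ) :
    rvPartialSum p (τ - Pi.single W c) k =
      rvPartialSum p τ k - if (p W : ℕ) < k then c else 0 := by
  simp [rvPartialSum, sum_sub_distrib, sum_pi_single']

lemma sub_single_mem_rvTplus_rvUpdate (hd : 0 < d) {e f f' : A ≃ Fin d}
    (hWL : e.symm (finTop d hd) ≠ f.symm (finTop d hd))
    (hf' : ∀ α, f' α = rvUpdate d hd e f α) {τ : A → ℝ} (hτ : τ ∈ rvTplus d e f) :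
    τ - Pi.single (e.symm (finTop d hd)) (τ (f.symm (finTop d hd))) ∈ rvTplus d e f' := by
  set W := e.symm (finTop d hd)
  have heW : (e W : ℕ) = d - 1 := val_symm_finTop hd e
  have hm : (f W : ℕ) < d - 1 := (val_lt_pred_iff_ne_symm_finTop hd f W).2 hWL
  have hf'W : (f' W : ℕ) = f W := by rw [hf', val_rvUpdate, if_pos le_rfl]
  have hτ' := mem_rvTplus_iff.mp hτ
  refine mem_rvTplus_iff.mpr fun k hk1 hkd => ?_
  simp only [rvPartialSum_sub_single]
  refine ⟨by simpa [heW, show ¬d - 1 < k by omega] using (hτ' k hk1 hkd).1, ?_⟩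
  rcases lt_trichotomy k (f W + 1) with hk | rfl | hk
  · rw [if_neg (by omega), sub_zero, rvPartialSum_rvUpdate_of_le hd hf' τ hk.le]
    exact (hτ' k hk1 hkd).2
  · have hSm : rvPartialSum f τ (f W) ≤ 0 := by
      rcases Nat.eq_zero_or_pos (f W : ℕ) with h0 | h0
      · rw [h0, rvPartialSum_zero]
      · exact (hτ' _ h0 (by omega)).2.le
    rw [if_pos (by omega), rvPartialSum_rvUpdate_of_le hd hf' τ le_rfl, rvPartialSum_val_add_one]
    linarith [lt_of_mem_rvTplus (by omega) hτ]
  · obtain ⟨j, rfl⟩ : ∃ j, k = j + 1 := ⟨k - 1, by omega⟩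
    rw [if_pos (by omega), rvPartialSum_rvUpdate_succ hd hf' τ (show (f W : ℕ) < j by omega)
      (by omega)]
    linarith [(hτ' j (by omega) (by omega)).2]

lemma rvOmega_rvUpdate (hd : 0 < d) {e f f' : A ≃ Fin d}
    (hWL : e.symm (finTop d hd) ≠ f.symm (finTop d hd))
    (hf' : ∀ α, f' α = rvUpdate d hd e f α) :
    rvOmega d e f' = rvTheta d hd e f * rvOmega d e f * (rvTheta d hd e f)ᵀ := by
  have heW := val_symm_finTop hd e
  have hfL := val_symm_finTop hd f
  have hf_lt (α : A) := (val_lt_pred_iff_ne_symm_finTop hd f α).2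
  have he_lt (α : A) := (val_lt_pred_iff_ne_symm_finTop hd e α).2
  have hf'L := hf' (f.symm (finTop d hd)) ▸ val_rvUpdate_symm_finTop hd hWL
  have hf'_of_ne (α : A) (hα : α ≠ f.symm (finTop d hd)) :=
    hf' α ▸ val_rvUpdate_of_ne hd e f hα
  have hmono (α β : A) (hα : α ≠ f.symm (finTop d hd)) (hβ : β ≠ f.symm (finTop d hd)) :=
    hf' α ▸ hf' β ▸ val_rvUpdate_lt_val_rvUpdate_iff hd e f hα hβ
  ext α β
  rw [rvTheta, one_add_single_mul_mul_transpose_apply]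
  generalize e.symm (finTop d hd) = W at *
  generalize f.symm (finTop d hd) = L at *
  have hfW := hf_lt W hWL
  have heL := he_lt L hWL.symm
  have he_ne (γ : A) (hγ : γ ≠ L) : (e γ : ℕ) ≠ e L := fun h => hγ (e.injective (Fin.ext h))
  have hW_or (γ : A) : (f γ : ℕ) = f W ∨ (e γ : ℕ) < d - 1 := by
    rcases eq_or_ne γ W with rfl | hγW
    · exact Or.inl rfl
    · exact Or.inr (he_lt γ hγW)
  by_cases hα : α = L <;> by_cases hβ : β = L
  · subst hα hβ
    rw [if_pos rfl, if_pos rfl, if_pos ⟨rfl, rfl⟩]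
    simp only [rvOmega_apply, lt_irrefl, and_false, if_false]
    split_ifs <;> first | omega | norm_num
  · subst hα
    have := hf_lt β hβ; have := he_ne β hβ; have := hW_or β
    rw [if_pos rfl, if_neg hβ, if_neg (fun h => hβ h.2)]
    simp only [rvOmega_apply, hf'L, hf'_of_ne β hβ, hfL, heW]
    split_ifs <;> first | omega | norm_num
  · subst hβ
    have := hf_lt α hα; have := he_ne α hα; have := hW_or α
    rw [if_pos rfl, if_neg hα, if_neg (fun h => hα h.1)]
    simp only [rvOmega_apply, hf'L, hf'_of_ne α hα, hfL, heW]
    split_ifs <;> first | omega | norm_num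
  · rw [if_neg hα, if_neg hβ, if_neg (fun h => hα h.1), rvOmega_apply, rvOmega_apply]
    simp only [hmono α β hα hβ, hmono β α hβ hα, add_zero]

lemma rvTheta_transpose_mulVec_sub_single (hd : 0 < d) {e f : A ≃ Fin d}
    (hWL : e.symm (finTop d hd) ≠ f.symm (finTop d hd)) (τ : A → ℝ) :
    (rvTheta d hd e f)ᵀ *ᵥ
      (τ - Pi.single (e.symm (finTop d hd)) (τ (f.symm (finTop d hd)))) = τ := by
  ext γ
  rw [rvTheta, transpose_add, transpose_one, transpose_single, add_mulVec, one_mulVec,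
    single_mulVec]
  by_cases hγ : γ = e.symm (finTop d hd)
  · subst hγ
    simp [hWL.symm]
  · simp [Pi.single_apply, hγ]

lemma rvTheta_mulVec_image_rvConeU_subset (hd : 0 < d) {e f f' : A ≃ Fin d}
    (hWL : e.symm (finTop d hd) ≠ f.symm (finTop d hd))
    (hf' : ∀ α, f' α = rvUpdate d hd e f α) :
    (rvTheta d hd e f *ᵥ ·) '' rvConeU d e f ⊆ rvConeU d e f' := by
  rintro _ ⟨_, ⟨τ, hτ, rfl⟩, rfl⟩
  refine ⟨_, sub_single_mem_rvTplus_rvUpdate hd hWL hf' hτ, ?_⟩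
  dsimp only
  rw [rvOmega_rvUpdate hd hWL hf', ← mulVec_mulVec, ← mulVec_mulVec,
    rvTheta_transpose_mulVec_sub_single hd hWL, mulVec_neg]

end RauzyVeech

/-- Let `π` be an irreducible combinatorial data on an alphabet with
`d ≥ 2` symbols, `ε ∈ {0,1}` and `π' = r_ε(π)`.  Then
`Θ_{π,ε}(C^u_π) ⊆ C^u_{π'}`. -/
theorem stmt18 {A : Type*} [Fintype A] [DecidableEq A] (d : ℕ) (hd : 2 ≤ d)
    (π π' : Bool → A ≃ Fin d) (ε : Bool)
    (hirr : rvIrreducible d (π false) (π true))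
    (hkeep : π' ε = π ε)
    (hupd : ∀ α, (π' (!ε)) α = rvUpdate d (by omega) (π ε) (π (!ε)) α) :
    (rvTheta d (by omega) (π ε) (π (!ε))).mulVec ''
        rvConeU d (π false) (π true) ⊆ rvConeU d (π' false) (π' true) := by
  have hWL := symm_finTop_ne_of_rvIrreducible hd hirr
  cases ε with
  | false =>
    rw [hkeep]
    exact rvTheta_mulVec_image_rvConeU_subset _ hWL hupd
  | true =>
    rw [rvConeU_swap (π' true), rvConeU_swap (π true), hkeep]
    exact rvTheta_mulVec_image_rvConeU_subset _ hWL.symm hupd
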